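/- Let i < j be indices in Z_{2^n} and let g_i, g_j be rows of G_N = [[1,0],[1,1]]^{⊗n} over F_2. Then w(g_i XOR g_j) = w(g_i) if and only if w((NOT i) AND j) = 1, and w(g_i XOR g_j) > w(g_i) if and only if w((NOT i) AND j) > 1. -/

import Mathlib

/-- Hamming weight of the binary expansion of a natural number. -/
def wt (i : ℕ) : ℕ := (Nat.digits 2 i).sum

/-- The 2×2 polar kernel [[1,0],[1,1]] over F₂. -/
def kernel : Matrix (Fin 2) (Fin 2) (ZMod 2) := !![1, 0; 1, 1]

/-- The polar transform matrix `G_N = [[1,0],[1,1]]^{⊗ n}`, `N = 2^n`,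
defined as the n-fold Kronecker power of the kernel. -/
def polarG : (n : ℕ) → Matrix (Fin (2 ^ n)) (Fin (2 ^ n)) (ZMod 2)
  | 0 => 1
  | n + 1 =>
    Matrix.reindex (finProdFinEquiv.trans (finCongr (by ring)))
      (finProdFinEquiv.trans (finCongr (by ring)))
      (Matrix.kroneckerMap (· * ·) kernel (polarG n))

/-- Hamming weight of a binary vector. -/
def rowWt {N : ℕ} (v : Fin N → ZMod 2) : ℕ :=
  (Finset.univ.filter fun j => v j ≠ 0).card

/-!
Since the kernel `[[1,0],[1,1]]` has a `1` at `(x, x')` exactly when the bit `x'` is at most the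
bit `x`, the Kronecker power has `G_N[i][k] = 1` exactly when the bits of `k` are among those of
`i`. Hence the support of `g_i` consists of the `2^{w(i)}` submasks of `i`, and the supports of
`g_i` and `g_j` meet in the submasks of `i AND j`, so
`w(g_i + g_j) - w(g_i) = 2^{w(j)} - 2^{w(i AND j)+1} = 2^{w(i AND j)} (2^{w(NOT i AND j)} - 2)`,
where `w(NOT i AND j) ≥ 1` because `j > i` forces `j` to have a bit that `i` lacks.
-/

open Finset

theorem card_filter_xor_add_two_mul {α : Type*} (s : Finset α) (p q : α → Prop)
    [DecidablePred p] [DecidablePred q] :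
    #{a ∈ s | Xor (p a) (q a)} + 2 * #{a ∈ s | p a ∧ q a} =
      #{a ∈ s | p a} + #{a ∈ s | q a} := by
  simp only [card_filter, mul_sum, ← sum_add_distrib]
  refine sum_congr rfl fun a _ => ?_
  by_cases p a <;> by_cases q a <;> simp [*]

theorem lt_of_testBit_of_lt_two_pow {j n k : ℕ} (hj : j < 2 ^ n) (h : j.testBit k) : k < n :=
  (Nat.pow_lt_pow_iff_right one_lt_two).mp ((Nat.ge_two_pow_of_testBit h).trans_lt hj)

theorem wt_bit (b : Bool) (m : ℕ) : wt (Nat.bit b m) = b.toNat + wt m := by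
  rcases Nat.eq_zero_or_pos (Nat.bit b m) with h | h
  · obtain ⟨rfl, rfl⟩ := Nat.bit_eq_zero_iff.mp h
    simp [wt]
  · rw [wt, Nat.digits_def' one_lt_two h, List.sum_cons, Nat.bit_mod_two, Nat.bit_div_two, wt]

theorem wt_eq_card_equivBitIndices (m : ℕ) : wt m = #(equivBitIndices m) := by
  rw [equivBitIndices_apply, List.toFinset_card_of_nodup Nat.bitIndices_nodup]
  induction m using Nat.binaryRec with
  | zero => simp [wt]
  | bit b m ih =>
    rw [wt_bit, ih]
    cases b
    · rw [Nat.bitIndices_bit_false, List.length_map, Bool.toNat_false, zero_add]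
    · rw [Nat.bitIndices_bit_true, List.length_cons, List.length_map, Bool.toNat_true, add_comm]

theorem equivBitIndices_and (a b : ℕ) :
    equivBitIndices (a &&& b) = equivBitIndices a ∩ equivBitIndices b := by
  ext k
  simp [Nat.testBit_and]

theorem equivBitIndices_compl_and {n : ℕ} (i : ℕ) {j : ℕ} (hj : j < 2 ^ n) :
    equivBitIndices (((2 ^ n - 1) ^^^ i) &&& j) = equivBitIndices j \ equivBitIndices i := by
  ext k
  simp only [equivBitIndices_apply, List.mem_toFinset, Nat.mem_bitIndices, mem_sdiff,
    Nat.testBit_and, Nat.testBit_xor, Nat.testBit_two_pow_sub_one]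
  have hjk := @lt_of_testBit_of_lt_two_pow j n k hj
  by_cases hk : k < n <;> simp_all [and_comm]

theorem le_of_equivBitIndices_subset {a b : ℕ} (h : equivBitIndices a ⊆ equivBitIndices b) :
    a ≤ b := by
  have hab : a &&& b = a := by
    rw [← equivBitIndices.injective.eq_iff, equivBitIndices_and, inter_eq_left.mpr h]
  exact hab ▸ Nat.and_le_right

theorem card_equivBitIndices_subset {n m : ℕ} (hm : m < 2 ^ n) :
    #{k : Fin (2 ^ n) | equivBitIndices k ⊆ equivBitIndices m} = 2 ^ wt m := by
  rw [wt_eq_card_equivBitIndices, ← card_powerset]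
  refine card_bij' (fun k _ => equivBitIndices k)
    (fun s hs => ⟨equivBitIndices.symm s, ?_⟩) ?_ ?_ ?_ ?_
  · exact (le_of_equivBitIndices_subset (by simpa using hs)).trans_lt hm
  all_goals simp

theorem equivBitIndices_two_pow_mul_add_subset_iff {n x x' y y' : ℕ} (hy : y < 2 ^ n)
    (hy' : y' < 2 ^ n) :
    equivBitIndices (2 ^ n * x' + y') ⊆ equivBitIndices (2 ^ n * x + y) ↔
      equivBitIndices x' ⊆ equivBitIndices x ∧ equivBitIndices y' ⊆ equivBitIndices y := by
  simp only [subset_iff, equivBitIndices_apply, List.mem_toFinset, Nat.mem_bitIndices,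
    Nat.testBit_two_pow_mul_add _ hy, Nat.testBit_two_pow_mul_add _ hy']
  refine ⟨fun h => ⟨fun k hk => ?_, fun k hk => ?_⟩, fun ⟨hx, hy⟩ k => ?_⟩
  · simpa using h (x := n + k) (by simpa using hk)
  · have hkn := lt_of_testBit_of_lt_two_pow hy' hk
    simpa [hkn] using h (x := k) (by simpa [hkn] using hk)
  · split_ifs
    exacts [@hy k, @hx (k - n)]

def topBitEquiv (n : ℕ) : Fin 2 × Fin (2 ^ n) ≃ Fin (2 ^ (n + 1)) :=
  finProdFinEquiv.trans (finCongr (by ring))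

theorem topBitEquiv_val (n : ℕ) (x : Fin 2) (y : Fin (2 ^ n)) :
    (topBitEquiv n (x, y) : ℕ) = 2 ^ n * x + y := by
  simp [topBitEquiv, add_comm]

theorem polarG_succ_topBitEquiv (n : ℕ) (x x' : Fin 2) (y y' : Fin (2 ^ n)) :
    polarG (n + 1) (topBitEquiv n (x, y)) (topBitEquiv n (x', y')) =
      kernel x x' * polarG n y y' := by
  simp [polarG, topBitEquiv]

theorem kernel_apply (x x' : Fin 2) :
    kernel x x' = if equivBitIndices x' ⊆ equivBitIndices x then 1 else 0 := by
  fin_cases x <;> fin_cases x' <;> simp [kernel]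

theorem polarG_apply (n : ℕ) (i k : Fin (2 ^ n)) :
    polarG n i k = if equivBitIndices k ⊆ equivBitIndices i then 1 else 0 := by
  induction n with
  | zero =>
    obtain rfl : i = k := Fin.ext (by omega)
    simp [polarG]
  | succ n ih =>
    obtain ⟨⟨x, y⟩, rfl⟩ := (topBitEquiv n).surjective i
    obtain ⟨⟨x', y'⟩, rfl⟩ := (topBitEquiv n).surjective k
    rw [polarG_succ_topBitEquiv, kernel_apply, ih, ite_zero_mul_ite_zero, mul_one]
    simp only [topBitEquiv_val, equivBitIndices_two_pow_mul_add_subset_iff y.isLt y'.isLt]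

theorem rowWt_polarG (n : ℕ) (i : Fin (2 ^ n)) : rowWt (polarG n i) = 2 ^ wt i := by
  simp only [rowWt, polarG_apply, ne_eq, ite_eq_right_iff, one_ne_zero, imp_false, not_not]
  exact card_equivBitIndices_subset i.isLt

theorem rowWt_polarG_add (n : ℕ) (i j : Fin (2 ^ n)) :
    rowWt (polarG n i + polarG n j) + 2 * 2 ^ wt ((i : ℕ) &&& j) = 2 ^ wt i + 2 ^ wt j := by
  have hsupp : rowWt (polarG n i + polarG n j) =
      #{k : Fin (2 ^ n) | Xor (equivBitIndices k ⊆ equivBitIndices i)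
        (equivBitIndices k ⊆ equivBitIndices j)} := by
    unfold rowWt
    congr 1
    ext k
    simp only [mem_filter, Pi.add_apply, polarG_apply]
    split_ifs <;> simp_all [CharTwo.add_self_eq_zero]
  rw [hsupp, ← card_equivBitIndices_subset i.isLt, ← card_equivBitIndices_subset j.isLt,
    ← card_equivBitIndices_subset (Nat.and_lt_two_pow _ j.isLt)]
  simp only [equivBitIndices_and, subset_inter_iff]
  exact card_filter_xor_add_two_mul _ _ _

theorem wt_and_add_wt_compl_and {n : ℕ} (i : ℕ) {j : ℕ} (hj : j < 2 ^ n) :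
    wt (i &&& j) + wt (((2 ^ n - 1) ^^^ i) &&& j) = wt j := by
  simp only [wt_eq_card_equivBitIndices, equivBitIndices_and, equivBitIndices_compl_and i hj]
  rw [inter_comm]
  exact card_inter_add_card_sdiff _ _

theorem wt_compl_and_pos {n i j : ℕ} (hij : i < j) (hj : j < 2 ^ n) :
    0 < wt (((2 ^ n - 1) ^^^ i) &&& j) := by
  rw [wt_eq_card_equivBitIndices, equivBitIndices_compl_and i hj, Finset.card_pos,
    Finset.sdiff_nonempty]
  exact fun h => hij.not_ge (le_of_equivBitIndices_subset h)

theorem rowWt_add_eq_iff (n : ℕ) (i j : Fin (2 ^ n)) (hij : (i : ℕ) < (j : ℕ)) :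
    (rowWt (polarG n i + polarG n j) = rowWt (polarG n i) ↔
      wt (((2 ^ n - 1) ^^^ (i : ℕ)) &&& (j : ℕ)) = 1) ∧
    (rowWt (polarG n i + polarG n j) > rowWt (polarG n i) ↔
      wt (((2 ^ n - 1) ^^^ (i : ℕ)) &&& (j : ℕ)) > 1) := by
  have hsum := rowWt_polarG_add n i j
  rw [← wt_and_add_wt_compl_and (i : ℕ) j.isLt, pow_add] at hsum
  obtain ⟨e, hd⟩ : ∃ e, wt (((2 ^ n - 1) ^^^ (i : ℕ)) &&& (j : ℕ)) = e + 1 :=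
    Nat.exists_eq_add_one.mpr (wt_compl_and_pos hij j.isLt)
  rw [hd, pow_succ] at hsum
  rw [rowWt_polarG, hd]
  have hc : 0 < 2 ^ wt ((i : ℕ) &&& j) := by positivity
  rcases Nat.eq_zero_or_pos e with rfl | he
  · simp only [pow_zero, one_mul] at hsum
    constructor <;> constructor <;> intro h <;> omega
  · have h2e : 2 ≤ 2 ^ e := Nat.le_self_pow he.ne' 2
    have hlt : 2 ^ wt (i : ℕ) < rowWt (polarG n i + polarG n j) := by nlinarith
    constructor <;> constructor <;> intro h <;> omega
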